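/- arXiv:2508.05270 — 5 statements merged into one kernel-verified Lean document; each statement's English description precedes it below -/
import Mathlib

section
/- The D4 cluster map, defined on nonzero variables by x1' = (1+x2)/x1, x2' = (1+x3*x4*x1')/x2, x3' = (1+x2')/x3, x4' = (1+x2')/x4, satisfies φ^4 = id; i.e., applying the map four times to any point (x1,x2,x3,x4) with all intermediate denominators nonzero returns the original point. -/
/-!
By the Laurent phenomenon every iterate of `d4Map` is a Laurent polynomial in the initial
point `(a, b, c, d)` whose denominator is a monomial. Writing the orbit out explicitly, each step
of the map becomes a set of exchange relations `x * x' = …`, which are polynomial identities once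
these monomial denominators are cleared, and the fourth point of the orbit is `(a, b, c, d)` again.
-/

/-- The D4 cluster map φ on quadruples of field elements. -/
def d4Map {F : Type*} [Field F] (p : F × F × F × F) : F × F × F × F :=
  let x1 := p.1; let x2 := p.2.1; let x3 := p.2.2.1; let x4 := p.2.2.2
  let x1' := (1 + x2) / x1
  let x2' := (1 + x3 * x4 * x1') / x2
  let x3' := (1 + x2') / x3
  let x4' := (1 + x2') / x4
  (x1', x2', x3', x4')

section

variable {F : Type*} [Field F]

def CoordsNeZero (p : F × F × F × F) : Prop :=
  p.1 ≠ 0 ∧ p.2.1 ≠ 0 ∧ p.2.2.1 ≠ 0 ∧ p.2.2.2 ≠ 0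

theorem d4Map_eq_of_mul_eq {x₁ x₂ x₃ x₄ y₁ y₂ y₃ y₄ : F} (hx : CoordsNeZero (x₁, x₂, x₃, x₄))
    (h₁ : x₁ * y₁ = 1 + x₂) (h₂ : x₂ * y₂ = 1 + x₃ * x₄ * y₁)
    (h₃ : x₃ * y₃ = 1 + y₂) (h₄ : x₄ * y₄ = 1 + y₂) :
    d4Map (x₁, x₂, x₃, x₄) = (y₁, y₂, y₃, y₄) := by
  obtain ⟨hx₁, hx₂, hx₃, hx₄⟩ := hx
  have e₁ : (1 + x₂) / x₁ = y₁ := by rw [div_eq_iff hx₁, ← h₁, mul_comm]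
  have e₂ : (1 + x₃ * x₄ * y₁) / x₂ = y₂ := by rw [div_eq_iff hx₂, ← h₂, mul_comm]
  have e₃ : (1 + y₂) / x₃ = y₃ := by rw [div_eq_iff hx₃, ← h₃, mul_comm]
  have e₄ : (1 + y₂) / x₄ = y₄ := by rw [div_eq_iff hx₄, ← h₄, mul_comm]
  simp only [d4Map, e₁, e₂, e₃, e₄]

def d4Orbit (a b c d : F) : ℕ → F × F × F × F
  | 0 => (a, b, c, d)
  | 1 => ((1 + b) / a, (a + (1 + b) * c * d) / (a * b),
      (1 + b) * (a + c * d) / (a * b * c), (1 + b) * (a + c * d) / (a * b * d))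
  | 2 => ((a + c * d) / b,
      ((a * (1 + b) + c * d) ^ 2 + b * c * d * (a + c * d)) / (a * b ^ 2 * c * d),
      (a * (1 + b) + c * d) / (b * d), (a * (1 + b) + c * d) / (b * c))
  | 3 => ((1 + b) * (a * (1 + b) + c * d) / (a * b * c * d),
      (a * (1 + b) ^ 2 + c * d) / (b * c * d), (1 + b) / c, (1 + b) / d)
  | n + 4 => d4Orbit a b c d n

theorem d4Map_d4Orbit {a b c d : F} (hp : CoordsNeZero (a, b, c, d)) :
    ∀ k, CoordsNeZero (d4Orbit a b c d k) → d4Map (d4Orbit a b c d k) = d4Orbit a b c d (k + 1)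
  | k + 4, h => d4Map_d4Orbit hp k h
  | 0, h | 1, h | 2, h | 3, h => by
    obtain ⟨ha, hb, hc, hd⟩ := hp
    refine d4Map_eq_of_mul_eq h ?_ ?_ ?_ ?_ <;> field_simp <;> ring

end

/-- The D4 cluster map has period 4: applying it four times returns the original
point, provided all intermediate denominators are nonzero. -/
theorem d4Map_periodic_four {F : Type*} [Field F] (p : F × F × F × F)
    (h : ∀ k < 4, (d4Map^[k] p).1 ≠ 0 ∧ (d4Map^[k] p).2.1 ≠ 0 ∧
      (d4Map^[k] p).2.2.1 ≠ 0 ∧ (d4Map^[k] p).2.2.2 ≠ 0) :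
    d4Map^[4] p = p := by
  obtain ⟨a, b, c, d⟩ := p
  have horbit : ∀ k ≤ 4, d4Map^[k] (a, b, c, d) = d4Orbit a b c d k := by
    intro k hk
    induction k with
    | zero => rfl
    | succ k ih =>
      have hk' := ih (by omega)
      rw [Function.iterate_succ_apply', hk']
      exact d4Map_d4Orbit (h 0 (by norm_num)) k (hk' ▸ h k (by omega))
  exact horbit 4 le_rfl
end

section
/- The symplectic reduction of the D4 cluster map, given by φ̂(y1,y2) = ((y1*y2+y2+1)/y1, (y1+1)*(y2+1)^2/(y1^2*y2)), satisfies φ̂^4 = id wherever defined (all denominators nonzero). -/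
/-- The symplectic reduction of the D4 cluster map. -/
def d4Red {F : Type*} [Field F] (p : F × F) : F × F :=
  ((p.1 * p.2 + p.2 + 1) / p.1, (p.1 + 1) * (p.2 + 1) ^ 2 / (p.1 ^ 2 * p.2))

/-! The square of `d4Red` has the closed form `d4RedSq`, and `d4RedSq` is an involution; both are
identities of rational functions, so `d4Red^[4] = d4RedSq ∘ d4RedSq = id` wherever defined. -/

section

variable {F : Type*} [Field F]

def d4RedSq (p : F × F) : F × F :=
  (((p.1 + p.2 + 1) ^ 2 + p.1 * p.2 * (p.2 + 1)) / (p.1 ^ 2 * p.2),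
    (p.1 + p.2 + 1) ^ 2 / (p.1 * p.2 * (p.2 + 1)))

/-- With `x / 0 = 0`, nonvanishing of the coordinates of `d4Red p` already forces every
denominator met along the way to be nonzero, `p.1` and `p.2` included. -/
theorem d4Red_d4Red {p : F × F} (h : (d4Red p).1 ≠ 0 ∧ (d4Red p).2 ≠ 0) :
    d4Red (d4Red p) = d4RedSq p := by
  obtain ⟨x, y⟩ := p
  simp only [d4Red, ne_eq, div_eq_zero_iff, mul_eq_zero, pow_eq_zero_iff two_ne_zero,
    not_or] at h
  obtain ⟨⟨hn, hx⟩, ⟨hx1, hy1⟩, -, hy⟩ := h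
  have hu : (x * y + y + 1) / x ≠ 0 := div_ne_zero hn hx
  simp only [d4Red, d4RedSq, Prod.mk.injEq]
  constructor
  · rw [div_eq_div_iff hu (by positivity)]
    field_simp
    ring
  · rw [div_eq_div_iff (by positivity) (by positivity)]
    field_simp
    ring

theorem d4RedSq_d4RedSq {p : F × F} (h : (d4RedSq p).1 ≠ 0 ∧ (d4RedSq p).2 ≠ 0) :
    d4RedSq (d4RedSq p) = p := by
  obtain ⟨x, y⟩ := p
  simp only [d4RedSq, ne_eq, div_eq_zero_iff, mul_eq_zero, pow_eq_zero_iff two_ne_zero,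
    not_or] at h
  obtain ⟨⟨hN, hx, hy⟩, hs, -, hy1⟩ := h
  have hv1 : (x + y + 1) ^ 2 / (x * y * (y + 1)) + 1 ≠ 0 := by
    rw [div_add_one (by positivity)]
    exact div_ne_zero hN (by positivity)
  simp only [d4RedSq, Prod.mk.injEq]
  constructor
  · field_simp
    ring
  · field_simp
    ring

end

/-- The reduced D4 map satisfies φ̂⁴ = id wherever all denominators are nonzero. -/
theorem d4Red_periodic_four {F : Type*} [Field F] (p : F × F)
    (h : ∀ k < 4, (d4Red^[k] p).1 ≠ 0 ∧ (d4Red^[k] p).2 ≠ 0) :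
    d4Red^[4] p = p := by
  have h₂ : d4Red^[2] p = d4RedSq p := d4Red_d4Red (h 1 (by norm_num))
  have h₄ : d4Red^[4] p = d4RedSq (d4Red^[2] p) := d4Red_d4Red (h 3 (by norm_num))
  rw [h₄, h₂, d4RedSq_d4RedSq (h₂ ▸ h 2 (by norm_num))]
end

section
/- The function K(y1,y2) = ((1+y1)^3 + (2+5*y1+y1^3)*y2 + (1+y1)^2*y2^2)/(y1^2*y2) is invariant under the map φ̂(y1,y2) = ((y1*y2+y2+1)/y1, (y1+1)*(y2+1)^2/(y1^2*y2)); i.e., K(φ̂(y1,y2)) = K(y1,y2) whenever all denominators are nonzero. -/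
/-- First integral of the reduced D4 map. -/
def d4K {F : Type*} [Field F] (p : F × F) : F :=
  ((1 + p.1) ^ 3 + (2 + 5 * p.1 + p.1 ^ 3) * p.2 + (1 + p.1) ^ 2 * p.2 ^ 2) /
    (p.1 ^ 2 * p.2)

/-- K is invariant under the reduced D4 map: K(φ̂(y₁,y₂)) = K(y₁,y₂) whenever all
denominators are nonzero. -/
theorem d4K_invariant {F : Type*} [Field F] (p : F × F)
    (h1 : p.1 ≠ 0) (h2 : p.2 ≠ 0)
    (h1' : (d4Red p).1 ≠ 0) (h2' : (d4Red p).2 ≠ 0) :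
    d4K (d4Red p) = d4K p := by
  -- Cross-multiply while the new denominator is still `c ^ 2 * d` in the coordinates `(c, d)` of
  -- `d4Red p`: expanded in `p`, `field_simp` cannot see that it is nonzero.
  rw [d4K, d4K, div_eq_div_iff (mul_ne_zero (pow_ne_zero 2 h1') h2')
    (mul_ne_zero (pow_ne_zero 2 h1) h2)]
  obtain ⟨a, b⟩ := p
  simp only [d4Red] at *
  field_simp
  ring
end

section
/- The 14×14 integer matrix M = M_φ · M_χ, representing the composition φ̂∘χ̂ on the Picard lattice, has characteristic polynomial (λ−1)^9 (λ+1)^5. -/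
open Polynomial

/-- The matrix representation of the action of φ̂ on Pic(X). -/
def Mphi : Matrix (Fin 14) (Fin 14) ℤ :=
  Matrix.of
    ![![0, 0, 0, 1, 0, 0, 0, 0, 0, 1, 0, 0, 0, 0],
      ![1, 0, 0, 0, 0, 0, 0, 0, 0, 0, 0, 0, -1, 0],
      ![0, 1, 0, 0, 0, 0, 0, 0, 0, 1, 0, 0, 1, 0],
      ![0, 0, 1, 0, 0, 0, 0, 0, 0, 2, 0, 0, 2, 0],
      ![0, 0, 0, 0, 0, 0, 0, 1, 0, 0, 0, 0, -1, 0],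
      ![0, 0, 0, 0, 1, 0, 0, 0, 0, 0, 0, 0, 0, 0],
      ![0, 0, 0, 0, 0, 1, 0, 0, 0, 1, 0, 0, 1, 0],
      ![0, 0, 0, 0, 0, 0, 1, 0, 0, 1, 0, 0, 1, 0],
      ![0, 0, 0, 0, 0, 0, 0, 0, 0, -1, 0, 0, -1, 0],
      ![0, 0, 0, 0, 0, 0, 0, 0, 0, 0, 0, 0, -1, 1],
      ![0, 0, 0, 0, 0, 0, 0, 0, 1, 0, 0, 0, 0, 0],
      ![0, 0, 0, 0, 0, 0, 0, 0, 0, 1, 1, 0, 1, 0],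
      ![0, 0, 0, 0, 0, 0, 0, 0, 0, 0, 0, 0, 1, 0],
      ![0, 0, 0, 0, 0, 0, 0, 0, 0, 1, 0, 1, 1, 0]]

/-- The matrix representation of the action of χ̂ on Pic(X). -/
def Mchi : Matrix (Fin 14) (Fin 14) ℤ :=
  Matrix.of
    ![![0, 0, 0, 1, 0, 0, 0, 0, 1, 1, 1, 0, 0, 0],
      ![1, 0, 0, 0, 0, 0, 0, 0, 2, 1, 2, 2, 0, 1],
      ![0, 1, 0, 0, 0, 0, 0, 0, 2, 0, 1, 1, 0, 2],
      ![0, 0, 1, 0, 0, 0, 0, 0, 1, 0, 0, -1, 0, 1],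
      ![0, 0, 0, 0, 0, 0, 0, 1, 1, 1, 1, 1, 0, 0],
      ![0, 0, 0, 0, 1, 0, 0, 0, 1, 0, 1, 1, 0, 1],
      ![0, 0, 0, 0, 0, 1, 0, 0, 1, 0, 0, 0, 0, 1],
      ![0, 0, 0, 0, 0, 0, 1, 0, 0, 0, 0, -1, 0, 0],
      ![0, 0, 0, 0, 0, 0, 0, 0, 1, 1, 1, 1, 1, 0],
      ![0, 0, 0, 0, 0, 0, 0, 0, 0, 1, 0, 1, 0, 0],
      ![0, 0, 0, 0, 0, 0, 0, 0, 1, 0, 1, 1, 0, 1],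
      ![0, 0, 0, 0, 0, 0, 0, 0, 1, 0, 0, 0, 0, 1],
      ![0, 0, 0, 0, 0, 0, 0, 0, -1, -1, -1, -1, 0, -1],
      ![0, 0, 0, 0, 0, 0, 0, 0, -1, 0, 0, -1, 0, 0]]

/-!
Over `ℤ`, `Mphi * Mchi` is conjugate to an upper triangular matrix whose diagonal has five entries
`-1` followed by nine entries `1`: the columns of `basisChange` are a lattice basis adapted to an
invariant flag running first through the generalized `(-1)`-eigenlattice and then through the
generalized `1`-eigenlattice. The characteristic polynomial is read off that diagonal.
-/

open Matrix

def basisChange : Matrix (Fin 14) (Fin 14) ℤ :=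
  Matrix.of
    ![![-1, 0, 0, 0, 1, -1, 0, -1, 1, -1, 1, 1, 0, 1],
      ![0, -1, 0, 0, 1, 0, 0, -1, 1, -1, 1, 1, 0, 1],
      ![1, 0, 0, 0, 0, 0, 0, 0, 0, 0, 0, 0, 0, 0],
      ![0, 1, 0, 0, 0, 0, 0, 0, 0, 0, 0, 0, 0, 0],
      ![0, 0, -1, 0, 0, 0, -1, 0, 0, 0, 0, 0, 0, 0],
      ![0, 0, 0, -1, 1, 0, 0, 0, 1, -1, 1, 1, 0, 1],
      ![0, 0, 1, 0, 0, 0, 0, 0, 0, 0, 0, 0, 0, 0],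
      ![0, 0, 0, 1, 0, 0, 0, 0, 0, 0, 0, 0, 0, 0],
      ![0, 0, 0, 0, -1, 0, 0, 0, 0, 1, -1, -1, 0, -1],
      ![0, 0, 0, 0, -1, 0, 0, 0, 0, -1, 0, 0, 1, 0],
      ![0, 0, 0, 0, 1, 0, 0, 0, 0, 0, 0, 0, -1, 0],
      ![0, 0, 0, 0, 0, 0, 0, 0, 0, 0, 1, 0, 0, 0],
      ![0, 0, 0, 0, 0, 0, 0, 0, 0, 0, 0, 1, 0, 0],
      ![0, 0, 0, 0, 1, 0, 0, 0, 0, 0, 0, 0, 0, 0]]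

def basisChangeInv : Matrix (Fin 14) (Fin 14) ℤ :=
  Matrix.of
    ![![0, 0, 1, 0, 0, 0, 0, 0, 0, 0, 0, 0, 0, 0],
      ![0, 0, 0, 1, 0, 0, 0, 0, 0, 0, 0, 0, 0, 0],
      ![0, 0, 0, 0, 0, 0, 1, 0, 0, 0, 0, 0, 0, 0],
      ![0, 0, 0, 0, 0, 0, 0, 1, 0, 0, 0, 0, 0, 0],
      ![0, 0, 0, 0, 0, 0, 0, 0, 0, 0, 0, 0, 0, 1],
      ![-1, 1, -1, 1, 0, 0, 0, 0, 0, 0, 0, 0, 0, 0],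
      ![0, 0, 0, 0, -1, 0, -1, 0, 0, 0, 0, 0, 0, 0],
      ![0, -1, 0, -1, 0, 1, 0, 1, 0, 0, 0, 0, 0, 0],
      ![0, 0, 0, 0, 0, 1, 0, 1, 1, 0, 0, 0, 0, 0],
      ![0, 0, 0, 0, 0, 0, 0, 0, 0, -1, -1, 0, 0, 0],
      ![0, 0, 0, 0, 0, 0, 0, 0, 0, 0, 0, 1, 0, 0],
      ![0, 0, 0, 0, 0, 0, 0, 0, 0, 0, 0, 0, 1, 0],
      ![0, 0, 0, 0, 0, 0, 0, 0, 0, 0, -1, 0, 0, 1],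
      ![0, 0, 0, 0, 0, 0, 0, 0, -1, -1, -1, -1, -1, -1]]

def triangularForm : Matrix (Fin 14) (Fin 14) ℤ :=
  Matrix.of
    ![![-1, 0, 0, 0, 0, -1, 0, -1, 1, -1, 2, 0, 0, 0],
      ![0, -1, 0, 0, 0, 0, 0, -1, 1, -1, 2, 1, 1, 1],
      ![0, 0, -1, 0, 0, 0, -1, 0, 0, 0, 1, 0, 0, 0],
      ![0, 0, 0, -1, 0, 0, 0, 0, 1, -1, 1, 1, 1, 1],
      ![0, 0, 0, 0, -1, 0, 0, 0, 0, 0, 0, 0, 1, 0],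
      ![0, 0, 0, 0, 0, 1, 0, 0, 0, 0, 0, 0, 0, 0],
      ![0, 0, 0, 0, 0, 0, 1, 0, 0, 0, 0, 1, 0, 1],
      ![0, 0, 0, 0, 0, 0, 0, 1, 0, 0, 0, 1, 0, 1],
      ![0, 0, 0, 0, 0, 0, 0, 0, 1, 0, 0, -1, 0, -1],
      ![0, 0, 0, 0, 0, 0, 0, 0, 0, 1, 0, 0, 0, 1],
      ![0, 0, 0, 0, 0, 0, 0, 0, 0, 0, 1, 0, 0, 0],
      ![0, 0, 0, 0, 0, 0, 0, 0, 0, 0, 0, 1, 0, 1],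
      ![0, 0, 0, 0, 0, 0, 0, 0, 0, 0, 0, 0, 1, 1],
      ![0, 0, 0, 0, 0, 0, 0, 0, 0, 0, 0, 0, 0, 1]]

theorem Matrix.charpoly_eq_of_eq_conj {n R : Type*} [CommRing R] [Fintype n] [DecidableEq n]
    {A B P Q : Matrix n n R} (hQP : Q * P = 1) (h : A = P * B * Q) :
    A.charpoly = B.charpoly := by
  rw [h, mul_assoc, charpoly_mul_comm, mul_assoc, hQP, mul_one]

theorem basisChangeInv_mul_basisChange : basisChangeInv * basisChange = 1 := by
  decide

theorem Mphi_mul_Mchi_eq_conj_triangularForm :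
    Mphi * Mchi = basisChange * triangularForm * basisChangeInv := by
  decide

theorem triangularForm_isUpperTriangular : triangularForm.IsUpperTriangular := by
  -- Through `of.symm` the entries are a plain function, for which `Decidable` instances are found.
  have h : ∀ i j : Fin 14, j < i → of.symm triangularForm i j = 0 := by decide
  exact fun i j hji => h i j hji

theorem triangularForm_charpoly :
    triangularForm.charpoly = (X - 1) ^ 9 * (X + 1) ^ 5 := by
  rw [charpoly_of_isUpperTriangular _ triangularForm_isUpperTriangular]
  simp only [triangularForm, Int.reduceNeg, of_apply, cons_val', cons_val_fin_one, eq_intCast,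
    Fin.prod_univ_succ, Fin.isValue, cons_val_zero, Int.cast_neg, Int.cast_one, sub_neg_eq_add,
    cons_val_succ, Finset.univ_unique, Fin.default_eq_zero, Finset.prod_const,
    Finset.card_singleton, pow_one]
  ring

/-- The characteristic polynomial of M = M_φ · M_χ, the action of φ̂∘χ̂ on the
Picard lattice, is (λ−1)⁹(λ+1)⁵. -/
theorem Mphi_mul_Mchi_charpoly :
    (Mphi * Mchi).charpoly = (X - 1) ^ 9 * (X + 1) ^ 5 := by
  rw [charpoly_eq_of_eq_conj basisChangeInv_mul_basisChange Mphi_mul_Mchi_eq_conj_triangularForm,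
    triangularForm_charpoly]
end

section
/- Under the change of variables z̃ = z, w̃ = z/(w+1), the invariant K(z,w) = z + w + z/w + (αβ+1)w/z + (α+β+1)/w + (2αβ+α+β+1)/z + αβw/z^2 + (αβ+α+β)/(zw) + 2αβ/z^2 + αβ/(z^2 w) transforms into K = ((−α−β−2)·w̃^2 + (−z̃^2 −α −β + 2z̃ + 1)·w̃ − (z̃+1)(αβ + z̃)) / ((−z̃ + w̃)·w̃), a ratio of polynomials of bidegree at most (2,2) in (z̃, w̃). -/
/-- In the chart `w̃ = z / (w + 1)` the denominator `(-z̃ + w̃) w̃` is a monomial in `z, w` over a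
power of `w + 1`, hence is nonzero away from `z w (w + 1) = 0`. -/
theorem neg_add_div_mul_div_eq {F : Type*} [Field F] (z w : F) (hw1 : w + 1 ≠ 0) :
    (-z + z / (w + 1)) * (z / (w + 1)) = -(z ^ 2 * w) / (w + 1) ^ 2 := by
  field_simp
  ring

theorem K_bidegree_two_two_chart_general {F : Type*} [Field F] (a b z w : F)
    (hz : z ≠ 0) (hw : w ≠ 0) (hw1 : w + 1 ≠ 0) :
    z + w + z / w + (a * b + 1) * w / z + (a + b + 1) / w +
      (2 * (a * b) + a + b + 1) / z + a * b * w / z ^ 2 +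
      (a * b + a + b) / (z * w) + 2 * (a * b) / z ^ 2 + a * b / (z ^ 2 * w) =
    ((-a - b - 2) * (z / (w + 1)) ^ 2 +
      (-z ^ 2 - a - b + 2 * z + 1) * (z / (w + 1)) -
      (z + 1) * (a * b + z)) / ((-z + z / (w + 1)) * (z / (w + 1))) := by
  rw [neg_add_div_mul_div_eq z w hw1]
  field_simp
  ring

/-- Under the change of variables z̃ = z, w̃ = z/(w+1), the invariant K of the
deformed D4 map becomes a ratio of polynomials of bidegree at most (2,2):
K = ((−α−β−2)w̃² + (−z̃²−α−β+2z̃+1)w̃ − (z̃+1)(αβ+z̃)) / ((−z̃+w̃)w̃). -/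
theorem K_bidegree_two_two_chart {F : Type*} [Field F] (a b z w : F)
    (hz : z ≠ 0) (hw : w ≠ 0) (hw1 : w + 1 ≠ 0)
    (hwt : z / (w + 1) ≠ 0) (hd : -z + z / (w + 1) ≠ 0) :
    z + w + z / w + (a * b + 1) * w / z + (a + b + 1) / w +
      (2 * (a * b) + a + b + 1) / z + a * b * w / z ^ 2 +
      (a * b + a + b) / (z * w) + 2 * (a * b) / z ^ 2 + a * b / (z ^ 2 * w) =
    ((-a - b - 2) * (z / (w + 1)) ^ 2 +
      (-z ^ 2 - a - b + 2 * z + 1) * (z / (w + 1)) -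
      (z + 1) * (a * b + z)) / ((-z + z / (w + 1)) * (z / (w + 1))) :=
  K_bidegree_two_two_chart_general a b z w hz hw hw1
end
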